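/- arXiv:2012.05646 — 3 statements merged into one kernel-verified Lean document; each statement's English description precedes it below -/
import Mathlib

section
/- Let N ≥ 1, let a : {1,…,N} → ℂ be complex amplitudes, and let the frequencies be evenly spaced: fₙ = f_c + n·Δf for n = 1,…,N, with Δf > 0 and f_c > N·Δf. Define y(t) = Σₙ Re(aₙ·exp(2πi fₙ t)). Then the limit as T → ∞ of (1/T) ∫₀ᵀ y(t)⁴ dt equals (3/8) Σ_{(n₁,n₂,n₃,n₄): n₁+n₂=n₃+n₄} a_{n₁}·a_{n₂}·conj(a_{n₃})·conj(a_{n₄}), where the sum ranges over all quadruples (n₁,n₂,n₃,n₄) in {1,…,N}⁴ with n₁+n₂ = n₃+n₄. -/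
/-!
Write `y = Re z` with `z(t) = ∑ aₙ exp(2πi fₙ t)`, so that `y⁴ = (z + z̄)⁴ / 16` is a finite sum
of exponentials `c · exp(2πi g t)`. The time average of `exp(2πi g t)` tends to `1` if `g = 0` and
to `0` otherwise, so only the zero-frequency terms survive. All `fₙ` lie in `(f_c, 2 f_c)`, hence
`z⁴`, `z³ z̄` and their conjugates have no zero frequency, while in the balanced term `6 z² z̄² / 16`
the frequency `f_{n₁} + f_{n₂} - f_{n₃} - f_{n₄} = Δf (n₁ + n₂ - n₃ - n₄)` vanishes exactly when
`n₁ + n₂ = n₃ + n₄`.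
-/

open Filter Topology Complex MeasureTheory
open scoped Real ComplexConjugate

noncomputable def tone (f t : ℝ) : ℂ := exp (2 * π * I * f * t)

noncomputable def expSum {ι : Type*} (s : Finset ι) (c : ι → ℂ) (g : ι → ℝ) (t : ℝ) : ℂ :=
  ∑ i ∈ s, c i * tone (g i) t

/-- `L` is the DC component of `x`. -/
def HasMeanValue (x : ℝ → ℂ) (L : ℂ) : Prop :=
  Tendsto (fun T : ℝ => (1 / T : ℂ) * ∫ t in (0 : ℝ)..T, x t) atTop (𝓝 L)

@[fun_prop]
lemma continuous_tone (f : ℝ) : Continuous (tone f) := by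
  unfold tone; fun_prop

lemma tone_mul_tone (f g t : ℝ) : tone f t * tone g t = tone (f + g) t := by
  simp only [tone, ← exp_add]; push_cast; ring_nf

lemma conj_tone (f t : ℝ) : conj (tone f t) = tone (-f) t := by
  simp only [tone, ← exp_conj, map_mul, conj_ofReal, conj_I, map_ofNat]; push_cast; ring_nf

lemma norm_tone (f t : ℝ) : ‖tone f t‖ = 1 := by
  rw [tone, show 2 * (π : ℂ) * I * f * t = ((2 * π * f * t : ℝ) : ℂ) * I by push_cast; ring,
    norm_exp_ofReal_mul_I]

lemma tone_zero : tone 0 = fun _ => 1 := by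
  ext t; simp [tone]

lemma integral_tone {f : ℝ} (hf : f ≠ 0) (T : ℝ) :
    ∫ t in (0 : ℝ)..T, tone f t = (tone f T - 1) / (2 * π * I * f) := by
  have hc : 2 * (π : ℂ) * I * f ≠ 0 := by simp [Real.pi_ne_zero, hf]
  simpa [tone, mul_assoc] using integral_exp_mul_complex (a := 0) (b := T) hc

lemma hasMeanValue_const (c : ℂ) : HasMeanValue (fun _ => c) c := by
  refine tendsto_const_nhds.congr' ?_
  filter_upwards [eventually_ne_atTop 0] with T hT
  simp [intervalIntegral.integral_const, hT]

lemma hasMeanValue_tone_of_ne_zero {f : ℝ} (hf : f ≠ 0) : HasMeanValue (tone f) 0 := by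
  have hbound : ∀ T, ‖tone f T - 1‖ ≤ 2 := fun T =>
    (norm_sub_le _ _).trans (by rw [norm_tone, norm_one]; norm_num)
  refine squeeze_zero_norm' (a := fun T => 2 / ‖2 * π * I * (f : ℂ)‖ * T⁻¹) ?_
    (by simpa using tendsto_inv_atTop_zero.const_mul (2 / ‖2 * π * I * (f : ℂ)‖))
  filter_upwards [eventually_gt_atTop 0] with T hT
  rw [integral_tone hf, norm_mul, norm_div, norm_div, norm_one, norm_real,
    Real.norm_of_nonneg hT.le, one_div, mul_comm]
  gcongr
  exact hbound T

lemma hasMeanValue_tone (f : ℝ) : HasMeanValue (tone f) (if f = 0 then 1 else 0) := by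
  split_ifs with hf
  · rw [hf, tone_zero]; exact hasMeanValue_const 1
  · exact hasMeanValue_tone_of_ne_zero hf

namespace HasMeanValue

variable {x y : ℝ → ℂ} {L M : ℂ}

lemma const_mul (c : ℂ) (h : HasMeanValue x L) : HasMeanValue (fun t => c * x t) (c * L) := by
  refine (Tendsto.const_mul c h).congr fun T => ?_
  simp only [intervalIntegral.integral_const_mul]; ring

lemma star (h : HasMeanValue x L) : HasMeanValue (fun t => star (x t)) (star L) := by
  refine ((continuous_conj.tendsto L).comp h).congr fun T => ?_
  simp [intervalIntegral.intervalIntegral_conj]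

lemma add (h : HasMeanValue x L) (h' : HasMeanValue y M) (hx : LocallyIntegrable x)
    (hy : LocallyIntegrable y) : HasMeanValue (fun t => x t + y t) (L + M) := by
  refine (Tendsto.add h h').congr fun T => ?_
  rw [intervalIntegral.integral_add (hx.integrableOn_isCompact isCompact_uIcc).intervalIntegrable
    (hy.integrableOn_isCompact isCompact_uIcc).intervalIntegrable, mul_add]

lemma sum {ι : Type*} (s : Finset ι) {x : ι → ℝ → ℂ} {L : ι → ℂ}
    (h : ∀ i ∈ s, HasMeanValue (x i) (L i)) (hx : ∀ i ∈ s, LocallyIntegrable (x i)) :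
    HasMeanValue (fun t => ∑ i ∈ s, x i t) (∑ i ∈ s, L i) := by
  refine (tendsto_finsetSum s h).congr fun T => ?_
  rw [intervalIntegral.integral_finsetSum fun i hi =>
    ((hx i hi).integrableOn_isCompact isCompact_uIcc).intervalIntegrable, Finset.mul_sum]

lemma tendsto_ofReal_average {x : ℝ → ℝ} (h : HasMeanValue (fun t => (x t : ℂ)) L) :
    Tendsto (fun T : ℝ => (((1 / T) * ∫ t in (0 : ℝ)..T, x t : ℝ) : ℂ)) atTop (𝓝 L) :=
  h.congr fun T => by push_cast; rw [intervalIntegral.integral_ofReal]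

end HasMeanValue

section ExpSum

variable {ι κ : Type*} (s : Finset ι) (c : ι → ℂ) (g : ι → ℝ)

@[fun_prop]
lemma continuous_expSum : Continuous (expSum s c g) := by
  unfold expSum; fun_prop

lemma expSum_mul_expSum (u : Finset κ) (d : κ → ℂ) (h : κ → ℝ) (t : ℝ) :
    expSum s c g t * expSum u d h t =
      expSum (s ×ˢ u) (fun p => c p.1 * d p.2) (fun p => g p.1 + h p.2) t := by
  simp only [expSum, Finset.sum_mul_sum, Finset.sum_product, ← tone_mul_tone]
  exact Finset.sum_congr rfl fun _ _ => Finset.sum_congr rfl fun _ _ => by ring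

lemma conj_expSum (t : ℝ) :
    conj (expSum s c g t) = expSum s (fun i => conj (c i)) (fun i => -g i) t := by
  simp [expSum, conj_tone]

lemma hasMeanValue_expSum : HasMeanValue (expSum s c g) (∑ i ∈ s with g i = 0, c i) := by
  have := HasMeanValue.sum s (fun i _ => (hasMeanValue_tone (g i)).const_mul (c i))
    (fun i _ => (by fun_prop : Continuous fun t => c i * tone (g i) t).locallyIntegrable)
  simp only [mul_ite, mul_one, mul_zero] at this
  rwa [Finset.sum_filter]

lemma hasMeanValue_expSum_of_ne_zero (hg : ∀ i ∈ s, g i ≠ 0) : HasMeanValue (expSum s c g) 0 := by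
  simpa [Finset.filter_false_of_mem hg] using hasMeanValue_expSum s c g

end ExpSum

lemma ofReal_re_pow_four (w : ℂ) :
    ((w.re ^ 4 : ℝ) : ℂ) = 1 / 16 * (w * w * (w * w)) + 1 / 4 * (w * w * (w * conj w))
      + 3 / 8 * (w * w * (conj w * conj w)) + 1 / 4 * conj (w * w * (w * conj w))
      + 1 / 16 * conj (w * w * (w * w)) := by
  have hre : (w.re : ℂ) = (w + conj w) / 2 := by rw [add_conj]; push_cast; ring
  push_cast
  rw [hre]
  simp only [map_mul, conj_conj]
  ring

/-- The products are bracketed so that expanding them with `expSum_mul_expSum` indexes the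
terms by `((n₁, n₂), (n₃, n₄))`. -/
lemma hasMeanValue_re_pow_four {z : ℝ → ℂ} (hz : Continuous z) {S : ℂ}
    (h4 : HasMeanValue (fun t => z t * z t * (z t * z t)) 0)
    (h31 : HasMeanValue (fun t => z t * z t * (z t * conj (z t))) 0)
    (h22 : HasMeanValue (fun t => z t * z t * (conj (z t) * conj (z t))) S) :
    HasMeanValue (fun t => (((z t).re ^ 4 : ℝ) : ℂ)) (3 / 8 * S) := by
  have := (((((h4.const_mul (1 / 16)).add (h31.const_mul (1 / 4)) ?_ ?_).add
    (h22.const_mul (3 / 8)) ?_ ?_).add (h31.star.const_mul (1 / 4)) ?_ ?_).add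
    (h4.star.const_mul (1 / 16)) ?_ ?_)
  · convert this using 1
    · exact funext fun t => ofReal_re_pow_four (z t)
    · simp
  all_goals exact Continuous.locallyIntegrable (by fun_prop)

section EvenlySpaced

variable {N : ℕ} {fc Δf : ℝ}

lemma freq_pos (hΔ : 0 ≤ Δf) (hfc : N * Δf < fc) (n : ℕ) : 0 < fc + n * Δf := by
  have := mul_nonneg N.cast_nonneg hΔ
  have := mul_nonneg n.cast_nonneg hΔ
  linarith

lemma freq_lt_add (hΔ : 0 ≤ Δf) (hfc : N * Δf < fc) {m : ℕ} (hm : m ≤ N) (n k : ℕ) :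
    fc + m * Δf < fc + n * Δf + (fc + k * Δf) := by
  have := mul_le_mul_of_nonneg_right (Nat.cast_le.mpr hm : (m : ℝ) ≤ N) hΔ
  have := mul_nonneg n.cast_nonneg hΔ
  have := mul_nonneg k.cast_nonneg hΔ
  linarith

lemma freq_add_add_neg_eq_zero_iff (hΔ : Δf ≠ 0) (n₁ n₂ n₃ n₄ : ℕ) :
    fc + n₁ * Δf + (fc + n₂ * Δf) + (-(fc + n₃ * Δf) + -(fc + n₄ * Δf)) = 0 ↔
      n₁ + n₂ = n₃ + n₄ := by
  have : fc + n₁ * Δf + (fc + n₂ * Δf) + (-(fc + n₃ * Δf) + -(fc + n₄ * Δf)) =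
      (((n₁ + n₂ : ℕ) : ℝ) - ((n₃ + n₄ : ℕ) : ℝ)) * Δf := by push_cast; ring
  rw [this, mul_eq_zero, or_iff_left hΔ, sub_eq_zero, Nat.cast_inj]

end EvenlySpaced

theorem stmt_4_general (N : ℕ) (a : ℕ → ℂ) (fc Δf : ℝ) (hΔ : 0 < Δf)
    (hfc : (N : ℝ) * Δf < fc) :
    Tendsto (fun T : ℝ => (((1 / T) * ∫ t in (0:ℝ)..T,
        (∑ n ∈ Finset.Icc 1 N,
          (a n * Complex.exp
            (2 * (Real.pi : ℂ) * Complex.I * ((fc + (n : ℝ) * Δf : ℝ) : ℂ) * (t : ℂ))).re) ^ 4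
        : ℝ) : ℂ))
      atTop
      (nhds ((3 / 8) * ∑ q ∈ ((Finset.Icc 1 N ×ˢ Finset.Icc 1 N) ×ˢ
            (Finset.Icc 1 N ×ˢ Finset.Icc 1 N)).filter
            (fun q => q.1.1 + q.1.2 = q.2.1 + q.2.2),
          a q.1.1 * a q.1.2 * (starRingEnd ℂ) (a q.2.1) * (starRingEnd ℂ) (a q.2.2))) := by
  set z := expSum (Finset.Icc 1 N) a (fun n => fc + n * Δf)
  refine HasMeanValue.tendsto_ofReal_average ?_
  simp only [← re_sum]
  refine hasMeanValue_re_pow_four (z := z) (by fun_prop) ?_ ?_ ?_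
  · simp only [z, expSum_mul_expSum]
    refine hasMeanValue_expSum_of_ne_zero _ _ _ fun q _ => ne_of_gt ?_
    have := freq_pos hΔ.le hfc
    linarith [this q.1.1, this q.1.2, this q.2.1, this q.2.2]
  · simp only [z, conj_expSum, expSum_mul_expSum]
    refine hasMeanValue_expSum_of_ne_zero _ _ _ fun q hq => ne_of_gt ?_
    simp only [Finset.mem_product, Finset.mem_Icc] at hq
    have := freq_lt_add hΔ.le hfc hq.2.2.2 q.1.1 q.1.2
    have := freq_pos hΔ.le hfc q.2.1
    linarith
  · simp only [z, conj_expSum, expSum_mul_expSum]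
    convert hasMeanValue_expSum _ _ _ using 2
    · exact Finset.filter_congr fun q _ => (freq_add_add_neg_eq_zero_iff hΔ.ne' _ _ _ _).symm
    · ring

/-- The DC component of the fourth power of a multisine waveform with evenly spaced
frequencies `fₙ = f_c + n·Δf` (with `Δf > 0` and `f_c > N·Δf`) equals
`(3/8)·Σ_{n₁+n₂=n₃+n₄} a_{n₁} a_{n₂} conj(a_{n₃}) conj(a_{n₄})`. -/
theorem stmt_4 (N : ℕ) (hN : 1 ≤ N) (a : ℕ → ℂ) (fc Δf : ℝ) (hΔ : 0 < Δf)
    (hfc : (N : ℝ) * Δf < fc) :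
    Tendsto (fun T : ℝ => (((1 / T) * ∫ t in (0:ℝ)..T,
        (∑ n ∈ Finset.Icc 1 N,
          (a n * Complex.exp
            (2 * (Real.pi : ℂ) * Complex.I * ((fc + (n : ℝ) * Δf : ℝ) : ℂ) * (t : ℂ))).re) ^ 4
        : ℝ) : ℂ))
      atTop
      (nhds ((3 / 8) * ∑ q ∈ ((Finset.Icc 1 N ×ˢ Finset.Icc 1 N) ×ˢ
            (Finset.Icc 1 N ×ˢ Finset.Icc 1 N)).filter
            (fun q => q.1.1 + q.1.2 = q.2.1 + q.2.2),
          a q.1.1 * a q.1.2 * (starRingEnd ℂ) (a q.2.1) * (starRingEnd ℂ) (a q.2.2))) :=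
  stmt_4_general N a fc Δf hΔ hfc
end

section
/- Let N ≥ 1, let h : {1,…,N} → ℂ^M with each h_n ≠ 0, let s : {1,…,N} → ℝ with s_n ≥ 0, and let w : {1,…,N} → ℂ^M satisfy ‖w_n‖ ≤ s_n for all n. Then Re( Σ_{(n₁,n₂,n₃,n₄): n₁+n₂=n₃+n₄} (h_{n₁}ᴴw_{n₁})·(h_{n₂}ᴴw_{n₂})·conj(h_{n₃}ᴴw_{n₃})·conj(h_{n₄}ᴴw_{n₄}) ) ≤ Σ_{(n₁,n₂,n₃,n₄): n₁+n₂=n₃+n₄} ‖h_{n₁}‖s_{n₁}·‖h_{n₂}‖s_{n₂}·‖h_{n₃}‖s_{n₃}·‖h_{n₄}‖s_{n₄}, where both sums range over quadruples in {1,…,N}⁴ with n₁+n₂ = n₃+n₄, and equality holds for the maximum-ratio transmission precoders w_n = s_n·h_n/‖h_n‖. -/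
/-!
Each factor `h_nᴴ w_n` is bounded in modulus by `‖h_n‖ s_n` (Cauchy–Schwarz and `‖w_n‖ ≤ s_n`),
so the real part of each fourth-order term is at most the product of the four bounds. For MRT
each factor equals the real number `‖h_n‖ s_n` exactly, so every term attains its bound.
-/

open ComplexConjugate

theorem EuclideanSpace.sum_conj_mul_eq_inner {𝕜 ι : Type*} [RCLike 𝕜] [Fintype ι]
    (x y : EuclideanSpace 𝕜 ι) : ∑ i, conj (x i) * y i = inner 𝕜 x y := by
  simp [PiLp.inner_apply, mul_comm]

theorem inner_div_norm_smul_self {𝕜 E : Type*} [RCLike 𝕜] [NormedAddCommGroup E]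
    [InnerProductSpace 𝕜 E] [Module ℝ E] [IsScalarTower ℝ 𝕜 E] (x : E) (c : ℝ) :
    inner 𝕜 x ((c / ‖x‖) • x) = ((‖x‖ * c : ℝ) : 𝕜) := by
  rcases eq_or_ne x 0 with rfl | hx
  · simp
  have : ‖x‖ ≠ 0 := norm_ne_zero_iff.mpr hx
  rw [RCLike.real_smul_eq_coe_smul (K := 𝕜), inner_smul_right, inner_self_eq_norm_sq_to_K]
  push_cast
  field_simp

theorem Complex.re_mul_mul_conj_mul_conj_le {a b c d : ℂ} {A B C D : ℝ} (ha : ‖a‖ ≤ A)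
    (hb : ‖b‖ ≤ B) (hc : ‖c‖ ≤ C) (hd : ‖d‖ ≤ D) :
    (a * b * conj c * conj d).re ≤ A * B * C * D := by
  have hA := (norm_nonneg a).trans ha
  have hB := (norm_nonneg b).trans hb
  have hC := (norm_nonneg c).trans hc
  calc (a * b * conj c * conj d).re ≤ ‖a * b * conj c * conj d‖ := re_le_norm _
    _ = ‖a‖ * ‖b‖ * ‖c‖ * ‖d‖ := by simp only [norm_mul, Complex.norm_conj]
    _ ≤ A * B * C * D := by gcongr

theorem Complex.re_sum_mul_mul_conj_mul_conj_le {ι : Type*} (T : Finset ι)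
    (p : (ι × ι) × (ι × ι) → Prop) [DecidablePred p] (z : ι → ℂ) (b : ι → ℝ)
    (hzb : ∀ n ∈ T, ‖z n‖ ≤ b n) :
    (∑ q ∈ ((T ×ˢ T) ×ˢ (T ×ˢ T)).filter p,
        z q.1.1 * z q.1.2 * conj (z q.2.1) * conj (z q.2.2)).re
      ≤ ∑ q ∈ ((T ×ˢ T) ×ˢ (T ×ˢ T)).filter p, b q.1.1 * b q.1.2 * b q.2.1 * b q.2.2 := by
  rw [re_sum]
  refine Finset.sum_le_sum fun q hq => ?_
  simp only [Finset.mem_filter, Finset.mem_product] at hq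
  obtain ⟨⟨⟨h₁, h₂⟩, h₃, h₄⟩, -⟩ := hq
  exact re_mul_mul_conj_mul_conj_le (hzb _ h₁) (hzb _ h₂) (hzb _ h₃) (hzb _ h₄)

theorem Complex.re_sum_ofReal_mul_mul_conj_mul_conj {ι : Type*} (S : Finset ((ι × ι) × (ι × ι)))
    (b : ι → ℝ) :
    (∑ q ∈ S, (b q.1.1 : ℂ) * b q.1.2 * conj (b q.2.1 : ℂ) * conj (b q.2.2 : ℂ)).re
      = ∑ q ∈ S, b q.1.1 * b q.1.2 * b q.2.1 * b q.2.2 := by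
  simp only [conj_ofReal]
  norm_cast

theorem stmt_14_general (N M : ℕ)
    (h : ℕ → EuclideanSpace ℂ (Fin M))
    (s : ℕ → ℝ)
    (w : ℕ → EuclideanSpace ℂ (Fin M)) (hw : ∀ n ∈ Finset.Icc 1 N, ‖w n‖ ≤ s n) :
    (∑ q ∈ ((Finset.Icc 1 N ×ˢ Finset.Icc 1 N) ×ˢ
          (Finset.Icc 1 N ×ˢ Finset.Icc 1 N)).filter
          (fun q => q.1.1 + q.1.2 = q.2.1 + q.2.2),
        (∑ i, (starRingEnd ℂ) (h q.1.1 i) * w q.1.1 i) *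
        (∑ i, (starRingEnd ℂ) (h q.1.2 i) * w q.1.2 i) *
        (starRingEnd ℂ) (∑ i, (starRingEnd ℂ) (h q.2.1 i) * w q.2.1 i) *
        (starRingEnd ℂ) (∑ i, (starRingEnd ℂ) (h q.2.2 i) * w q.2.2 i)).re
      ≤ ∑ q ∈ ((Finset.Icc 1 N ×ˢ Finset.Icc 1 N) ×ˢ
          (Finset.Icc 1 N ×ˢ Finset.Icc 1 N)).filter
          (fun q => q.1.1 + q.1.2 = q.2.1 + q.2.2),
        (‖h q.1.1‖ * s q.1.1) * (‖h q.1.2‖ * s q.1.2) *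
        (‖h q.2.1‖ * s q.2.1) * (‖h q.2.2‖ * s q.2.2) ∧
    (∑ q ∈ ((Finset.Icc 1 N ×ˢ Finset.Icc 1 N) ×ˢ
          (Finset.Icc 1 N ×ˢ Finset.Icc 1 N)).filter
          (fun q => q.1.1 + q.1.2 = q.2.1 + q.2.2),
        (∑ i, (starRingEnd ℂ) (h q.1.1 i) * ((s q.1.1 / ‖h q.1.1‖) • h q.1.1) i) *
        (∑ i, (starRingEnd ℂ) (h q.1.2 i) * ((s q.1.2 / ‖h q.1.2‖) • h q.1.2) i) *
        (starRingEnd ℂ) (∑ i, (starRingEnd ℂ) (h q.2.1 i) * ((s q.2.1 / ‖h q.2.1‖) • h q.2.1) i) *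
        (starRingEnd ℂ) (∑ i, (starRingEnd ℂ) (h q.2.2 i) * ((s q.2.2 / ‖h q.2.2‖) • h q.2.2) i)).re
      = ∑ q ∈ ((Finset.Icc 1 N ×ˢ Finset.Icc 1 N) ×ˢ
          (Finset.Icc 1 N ×ˢ Finset.Icc 1 N)).filter
          (fun q => q.1.1 + q.1.2 = q.2.1 + q.2.2),
        (‖h q.1.1‖ * s q.1.1) * (‖h q.1.2‖ * s q.1.2) *
        (‖h q.2.1‖ * s q.2.1) * (‖h q.2.2‖ * s q.2.2) := by
  simp only [EuclideanSpace.sum_conj_mul_eq_inner, inner_div_norm_smul_self]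
  refine ⟨Complex.re_sum_mul_mul_conj_mul_conj_le _ _ (fun n => inner ℂ (h n) (w n))
    (fun n => ‖h n‖ * s n) fun n hn => ?_,
    Complex.re_sum_ofReal_mul_mul_conj_mul_conj _ (fun n => ‖h n‖ * s n)⟩
  exact (norm_inner_le_norm _ _).trans (mul_le_mul_of_nonneg_left (hw n hn) (norm_nonneg _))

/-- The real part of the fourth-order quadruple sum of received-signal inner products
`h_nᴴw_n` is upper bounded by the corresponding sum with `|h_nᴴw_n|` replaced by
`‖h_n‖·s_n`, whenever `‖w_n‖ ≤ s_n`; equality holds for the maximum-ratio transmission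
precoders `w_n = s_n·h_n/‖h_n‖`. -/
theorem stmt_14 (N M : ℕ) (hN : 1 ≤ N)
    (h : ℕ → EuclideanSpace ℂ (Fin M)) (hne : ∀ n ∈ Finset.Icc 1 N, h n ≠ 0)
    (s : ℕ → ℝ) (hs : ∀ n ∈ Finset.Icc 1 N, 0 ≤ s n)
    (w : ℕ → EuclideanSpace ℂ (Fin M)) (hw : ∀ n ∈ Finset.Icc 1 N, ‖w n‖ ≤ s n) :
    (∑ q ∈ ((Finset.Icc 1 N ×ˢ Finset.Icc 1 N) ×ˢ
          (Finset.Icc 1 N ×ˢ Finset.Icc 1 N)).filter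
          (fun q => q.1.1 + q.1.2 = q.2.1 + q.2.2),
        (∑ i, (starRingEnd ℂ) (h q.1.1 i) * w q.1.1 i) *
        (∑ i, (starRingEnd ℂ) (h q.1.2 i) * w q.1.2 i) *
        (starRingEnd ℂ) (∑ i, (starRingEnd ℂ) (h q.2.1 i) * w q.2.1 i) *
        (starRingEnd ℂ) (∑ i, (starRingEnd ℂ) (h q.2.2 i) * w q.2.2 i)).re
      ≤ ∑ q ∈ ((Finset.Icc 1 N ×ˢ Finset.Icc 1 N) ×ˢ
          (Finset.Icc 1 N ×ˢ Finset.Icc 1 N)).filter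
          (fun q => q.1.1 + q.1.2 = q.2.1 + q.2.2),
        (‖h q.1.1‖ * s q.1.1) * (‖h q.1.2‖ * s q.1.2) *
        (‖h q.2.1‖ * s q.2.1) * (‖h q.2.2‖ * s q.2.2) ∧
    (∑ q ∈ ((Finset.Icc 1 N ×ˢ Finset.Icc 1 N) ×ˢ
          (Finset.Icc 1 N ×ˢ Finset.Icc 1 N)).filter
          (fun q => q.1.1 + q.1.2 = q.2.1 + q.2.2),
        (∑ i, (starRingEnd ℂ) (h q.1.1 i) * ((s q.1.1 / ‖h q.1.1‖) • h q.1.1) i) *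
        (∑ i, (starRingEnd ℂ) (h q.1.2 i) * ((s q.1.2 / ‖h q.1.2‖) • h q.1.2) i) *
        (starRingEnd ℂ) (∑ i, (starRingEnd ℂ) (h q.2.1 i) * ((s q.2.1 / ‖h q.2.1‖) • h q.2.1) i) *
        (starRingEnd ℂ) (∑ i, (starRingEnd ℂ) (h q.2.2 i) * ((s q.2.2 / ‖h q.2.2‖) • h q.2.2) i)).re
      = ∑ q ∈ ((Finset.Icc 1 N ×ˢ Finset.Icc 1 N) ×ˢ
          (Finset.Icc 1 N ×ˢ Finset.Icc 1 N)).filter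
          (fun q => q.1.1 + q.1.2 = q.2.1 + q.2.2),
        (‖h q.1.1‖ * s q.1.1) * (‖h q.1.2‖ * s q.1.2) *
        (‖h q.2.1‖ * s q.2.1) * (‖h q.2.2‖ * s q.2.2) :=
  stmt_14_general N M h s w hw
end

section
/- Let N ≥ 1, and let β₂, β₄, P ≥ 0 and g ≥ 0 be real numbers. Suppose each of the N tones has channel amplitude g and multisine amplitude s = √(2P/N). Then β₂·(1/2)·Σ_{n=1}^{N} g²s² + β₄·(3/8)·Σ_{(n₁,n₂,n₃,n₄): n₁+n₂=n₃+n₄} g⁴s⁴ = β₂·g²·P + β₄·((2N² + 1)/(2N))·g⁴·P², where the second sum ranges over quadruples in {1,…,N}⁴ with n₁+n₂ = n₃+n₄. -/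
/-!
With `s² = 2P/N` both sums have constant summands, so everything reduces to counting the
quadruples with `n₁ + n₂ = n₃ + n₄`. For fixed `n₁, n₃` there are `N - |n₁ - n₃|` choices of
`(n₂, n₄)`, and summing over `n₁, n₃` gives `(2N³ + N) / 3` (induct on `N`: enlarging the square
`[1, N]²` adds `N² + (N + 1)²`).
-/

open Finset

theorem sum_Icc_one_id_mul_two (n : ℕ) : (∑ i ∈ Icc 1 n, i) * 2 = n * (n + 1) := by
  induction n with
  | zero => simp
  | succ n ih => rw [sum_Icc_succ_top (by omega), add_mul, ih]; ring

theorem card_filter_add_eq_add_Icc (N a c : ℕ) :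
    #{bd ∈ Icc 1 N ×ˢ Icc 1 N | a + bd.1 = c + bd.2} = N - Nat.dist a c := by
  have : {bd ∈ Icc 1 N ×ˢ Icc 1 N | a + bd.1 = c + bd.2}
      = (Icc 1 (N - Nat.dist a c)).image fun t => (t + (c - a), t + (a - c)) := by
    ext ⟨b, d⟩
    simp only [mem_filter, mem_product, mem_Icc, mem_image, Prod.mk.injEq, Nat.dist]
    constructor
    · rintro ⟨⟨⟨hb1, hb2⟩, hd1, hd2⟩, he⟩
      exact ⟨min b d, by omega, by omega, by omega⟩
    · rintro ⟨t, ht, rfl, rfl⟩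
      omega
  rw [this, card_image_of_injective _ fun t₁ t₂ h => by simpa using congrArg Prod.fst h,
    Nat.card_Icc, Nat.add_sub_cancel]

theorem card_filter_add_eq_add_Icc_eq_sum (N : ℕ) :
    #{q ∈ (Icc 1 N ×ˢ Icc 1 N) ×ˢ (Icc 1 N ×ˢ Icc 1 N) | q.1.1 + q.1.2 = q.2.1 + q.2.2}
      = ∑ a ∈ Icc 1 N, ∑ c ∈ Icc 1 N, (N - Nat.dist a c) := by
  rw [card_filter]
  simp only [sum_product]
  refine sum_congr rfl fun a _ => ?_
  rw [sum_comm]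
  refine sum_congr rfl fun c _ => ?_
  rw [← sum_product', ← card_filter_add_eq_add_Icc N a c, card_filter]

theorem sum_Icc_sub_dist_succ (n : ℕ) :
    ∑ a ∈ Icc 1 (n + 1), ∑ c ∈ Icc 1 (n + 1), (n + 1 - Nat.dist a c)
      = ∑ a ∈ Icc 1 n, ∑ c ∈ Icc 1 n, (n - Nat.dist a c) + n ^ 2 + (n + 1) ^ 2 := by
  have inner (a c : ℕ) (ha : a ∈ Icc 1 n) (hc : c ∈ Icc 1 n) :
      n + 1 - Nat.dist a c = n - Nat.dist a c + 1 := by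
    simp only [mem_Icc, Nat.dist] at ha hc ⊢; omega
  have last_col (a : ℕ) (ha : a ∈ Icc 1 n) : n + 1 - Nat.dist a (n + 1) = a := by
    simp only [mem_Icc, Nat.dist] at ha ⊢; omega
  have last_row (c : ℕ) (hc : c ∈ Icc 1 n) : n + 1 - Nat.dist (n + 1) c = c :=
    Nat.dist_comm c (n + 1) ▸ last_col c hc
  simp only [sum_Icc_succ_top (Nat.le_add_left 1 n), sum_add_distrib]
  rw [sum_congr rfl fun a ha => sum_congr rfl (inner a · ha ·), sum_congr rfl last_col,
    sum_congr rfl last_row]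
  simp only [sum_add_distrib, sum_const, Nat.card_Icc, Nat.dist_self, smul_eq_mul,
    Nat.add_sub_cancel, Nat.sub_zero, mul_one]
  linarith [sum_Icc_one_id_mul_two n]

theorem three_mul_sum_Icc_sub_dist (N : ℕ) :
    3 * ∑ a ∈ Icc 1 N, ∑ c ∈ Icc 1 N, (N - Nat.dist a c) = 2 * N ^ 3 + N := by
  induction N with
  | zero => simp
  | succ n ih => rw [sum_Icc_sub_dist_succ]; nlinarith

theorem three_mul_card_filter_add_eq_add_Icc (N : ℕ) :
    3 * #{q ∈ (Icc 1 N ×ˢ Icc 1 N) ×ˢ (Icc 1 N ×ˢ Icc 1 N) | q.1.1 + q.1.2 = q.2.1 + q.2.2}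
      = 2 * N ^ 3 + N := by
  rw [card_filter_add_eq_add_Icc_eq_sum, three_mul_sum_Icc_sub_dist]

theorem stmt_18_general (N : ℕ) (hN : 1 ≤ N) (β₂ β₄ P g : ℝ)
    (hP : 0 ≤ P) :
    let s : ℝ := Real.sqrt (2 * P / N)
    β₂ * (1 / 2) * (∑ _n ∈ Finset.Icc 1 N, g ^ 2 * s ^ 2)
      + β₄ * (3 / 8) * (∑ _q ∈ ((Finset.Icc 1 N ×ˢ Finset.Icc 1 N) ×ˢ
            (Finset.Icc 1 N ×ˢ Finset.Icc 1 N)).filter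
            (fun q => q.1.1 + q.1.2 = q.2.1 + q.2.2),
          g ^ 4 * s ^ 4)
    = β₂ * g ^ 2 * P + β₄ * ((2 * (N : ℝ) ^ 2 + 1) / (2 * N)) * g ^ 4 * P ^ 2 := by
  intro s
  have hN₀ : (N : ℝ) ≠ 0 := Nat.cast_ne_zero.mpr (by omega)
  have hs2 : s ^ 2 = 2 * P / N := Real.sq_sqrt (by positivity)
  have hs4 : s ^ 4 = (2 * P / N) ^ 2 := by rw [← hs2]; ring
  have hcard : 3 * (#{q ∈ (Icc 1 N ×ˢ Icc 1 N) ×ˢ (Icc 1 N ×ˢ Icc 1 N) |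
      q.1.1 + q.1.2 = q.2.1 + q.2.2} : ℝ) = 2 * N ^ 3 + N := by
    exact_mod_cast three_mul_card_filter_add_eq_add_Icc N
  rw [sum_const, sum_const, Nat.card_Icc, Nat.add_sub_cancel, nsmul_eq_mul, nsmul_eq_mul, hs2, hs4]
  field_simp
  linear_combination 8 * β₄ * g ^ 4 * P ^ 2 * hcard

/-- For a frequency-flat channel with per-tone amplitude `g` and uniform multisine power
allocation `s = √(2P/N)`, the truncated nonlinear harvester DC output equals
`β₂ g² P + β₄ ((2N²+1)/(2N)) g⁴ P²`. -/
theorem stmt_18 (N : ℕ) (hN : 1 ≤ N) (β₂ β₄ P g : ℝ)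
    (hβ₂ : 0 ≤ β₂) (hβ₄ : 0 ≤ β₄) (hP : 0 ≤ P) (hg : 0 ≤ g) :
    let s : ℝ := Real.sqrt (2 * P / N)
    β₂ * (1 / 2) * (∑ _n ∈ Finset.Icc 1 N, g ^ 2 * s ^ 2)
      + β₄ * (3 / 8) * (∑ _q ∈ ((Finset.Icc 1 N ×ˢ Finset.Icc 1 N) ×ˢ
            (Finset.Icc 1 N ×ˢ Finset.Icc 1 N)).filter
            (fun q => q.1.1 + q.1.2 = q.2.1 + q.2.2),
          g ^ 4 * s ^ 4)
    = β₂ * g ^ 2 * P + β₄ * ((2 * (N : ℝ) ^ 2 + 1) / (2 * N)) * g ^ 4 * P ^ 2 :=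
  stmt_18_general N hN β₂ β₄ P g hP
end
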